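/- arXiv:2308.10012 — 3 statements merged into one kernel-verified Lean document; each statement's English description precedes it below -/
import Mathlib

section
/- Weighted Poincaré-type inequality (second assertion of Lemma 3.1): If R > 0 is such that Ω ⊆ B(0,R), then for every z ∈ C_c^∞(Ω) one has (N−2+α)² ∫_Ω z(x)² dx ≤ (4 R^{2−α}/β) ∫_Ω |x|^α ⟨A(x)∇z(x), ∇z(x)⟩ dx; in particular every element of the weighted space with finite weighted Dirichlet energy ∫_Ω |x|^α ⟨A∇z, ∇z⟩ dx is square integrable. -/
open MeasureTheory Real Set Filter

noncomputable section

/-- Euclidean space `ℝ^N`. -/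
abbrev Euc (N : ℕ) := EuclideanSpace ℝ (Fin N)

/-- Action of an `N × N` matrix on a vector of `ℝ^N`. -/
def matVec {N : ℕ} (M : Matrix (Fin N) (Fin N) ℝ) (v : Euc N) : Euc N :=
  WithLp.toLp 2 (fun i => ∑ j, M i j * v j)

/-- Euclidean inner product `⟨a, b⟩ = ∑ aᵢ bᵢ`. -/
def edot {N : ℕ} (a b : Euc N) : ℝ := ∑ i, a i * b i

lemma aux_rpow_add_le {a b : ℝ} (ha : 0 ≤ a) (hb : 0 ≤ b) {p : ℝ} (hp : 0 ≤ p) (hp1 : p ≤ 1) :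
    (a + b) ^ p ≤ a ^ p + b ^ p := by
  lift a to NNReal using ha
  lift b to NNReal using hb
  have := NNReal.rpow_add_le_add_rpow a b hp hp1
  rw [← NNReal.coe_add, ← NNReal.coe_rpow, ← NNReal.coe_rpow, ← NNReal.coe_rpow,
    ← NNReal.coe_add] at *
  exact_mod_cast this

set_option maxHeartbeats 1000000 in
/-- Regularized Hardy inequality on the whole space. -/
lemma hardy_eps (N : ℕ) (z : Euc N → ℝ) (hz : ContDiff ℝ (⊤ : ℕ∞) z) (hzc : HasCompactSupport z)
    {α ε : ℝ} (hε : 0 < ε) (hα0 : 0 < α) (hα2 : α < 2) {c : ℝ} (hc : 0 < c)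
    (hcN : c = (N : ℝ) - 2 + α) :
    (c / 2) * ∫ x : Euc N, z x ^ 2 * (‖x‖ ^ 2 + ε) ^ ((α - 2) / 2) ≤
      (2 / c) * ∫ x : Euc N, (‖x‖ ^ 2 + ε) ^ (α / 2) * ‖fderiv ℝ z x‖ ^ 2 := by
  have hzcont : Continuous z := hz.continuous
  have hzdiff : Differentiable ℝ z := hz.differentiable (by simp)
  have hfcont : Continuous (fderiv ℝ z) := hz.continuous_fderiv (by simp)
  set p : ℝ := (α - 2) / 2 with hpdef
  set G : Euc N → ℝ := fun x => ‖fderiv ℝ z x‖ with hGdef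
  set Q : Euc N → ℝ := fun y => ‖y‖ ^ 2 + ε with hQdef
  have hQpos : ∀ y, 0 < Q y := fun y => by positivity
  have hQcont : Continuous Q := (continuous_norm.pow 2).add continuous_const
  have hQcd : ContDiff ℝ (⊤ : ℕ∞) Q := (contDiff_norm_sq ℝ).add contDiff_const
  set w : Euc N → ℝ := fun y => Q y ^ p with hwdef
  have hwcont : Continuous w := hQcont.rpow_const fun y => Or.inl (hQpos y).ne'
  have hwcd : ContDiff ℝ 1 w := by
    rw [contDiff_iff_contDiffAt]
    intro y
    exact (Real.contDiffAt_rpow_const_of_ne (hQpos y).ne').comp y (hQcd.contDiffAt.of_le (by simp))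
  set φ : Euc N → ℝ := fun y => z y ^ 2 * w y with hφdef
  have hφcd : ContDiff ℝ 1 φ := ((hz.of_le (by simp)).pow 2).mul hwcd
  have hφdiff : Differentiable ℝ φ := hφcd.differentiable (by simp)
  have hfφcont : Continuous (fderiv ℝ φ) := hφcd.continuous_fderiv (by simp)
  have hφcont : Continuous φ := (hzcont.pow 2).mul hwcont
  -- vanishing facts
  have hsupφ : ∀ y ∉ tsupport z, φ y = 0 := fun y hy => by
    simp [hφdef, image_eq_zero_of_notMem_tsupport hy]
  have htsupφ : tsupport φ ⊆ tsupport z := by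
    apply closure_mono
    intro y hy
    simp only [Function.mem_support] at hy ⊢
    intro h
    exact hy (by simp [hφdef, h])
  have hfφ0 : ∀ y ∉ tsupport z, fderiv ℝ φ y = 0 := by
    intro y hy
    have h1 : y ∉ tsupport φ := fun h => hy (htsupφ h)
    have h2 : φ =ᶠ[nhds y] 0 := notMem_tsupport_iff_eventuallyEq.1 h1
    rw [h2.fderiv_eq]
    exact fderiv_const_apply 0
  have hG0 : ∀ y ∉ tsupport z, fderiv ℝ z y = 0 := by
    intro y hy
    have hy' : y ∉ tsupport (fderiv ℝ z) := fun h => hy (tsupport_fderiv_subset ℝ h)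
    exact image_eq_zero_of_notMem_tsupport hy'
  -- integrability helper
  have intg : ∀ f : Euc N → ℝ, Continuous f → (∀ y ∉ tsupport z, f y = 0) →
      Integrable f volume :=
    fun f hf h0 => hf.integrable_of_hasCompactSupport (HasCompactSupport.intro hzc h0)
  have hintφ : Integrable φ volume := intg _ hφcont hsupφ
  have hintD : Integrable (fun x : Euc N => fderiv ℝ φ x x) volume :=
    intg _ (hfφcont.clm_apply continuous_id) fun y hy => by rw [hfφ0 y hy]; simp
  have hintT : Integrable (fun x : Euc N => Q x ^ (α / 2) * G x ^ 2) volume :=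
    intg _ ((hQcont.rpow_const fun y => Or.inl (hQpos y).ne').mul (hfcont.norm.pow 2))
      fun y hy => by simp [hGdef, hG0 y hy]
  -- the derivative formula
  have hder : ∀ x : Euc N, fderiv ℝ φ x x
      = w x * (2 * z x * fderiv ℝ z x x) + z x ^ 2 * ((α - 2) * ‖x‖ ^ 2 * Q x ^ ((α - 4) / 2)) := by
    intro x
    have hQeq : Q = fun y : Euc N => (inner ℝ y y : ℝ) + ε :=
      funext fun y => by rw [hQdef]; rw [real_inner_self_eq_norm_sq]
    have hinner : HasFDerivAt (fun y : Euc N => (inner ℝ y y : ℝ))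
        ((fderivInnerCLM ℝ ((x : Euc N), x)).comp
          ((ContinuousLinearMap.id ℝ (Euc N)).prod (ContinuousLinearMap.id ℝ (Euc N)))) x :=
      (hasFDerivAt_id x).inner (𝕜 := ℝ) (hasFDerivAt_id x)
    have hQder : HasFDerivAt Q ((fderivInnerCLM ℝ ((x : Euc N), x)).comp
        ((ContinuousLinearMap.id ℝ (Euc N)).prod (ContinuousLinearMap.id ℝ (Euc N)))) x := by
      rw [hQeq]
      exact hinner.add_const ε
    have hrpow : HasDerivAt (fun t : ℝ => t ^ p) (p * Q x ^ (p - 1)) (Q x) :=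
      Real.hasDerivAt_rpow_const (Or.inl (hQpos x).ne')
    have hwder : HasFDerivAt w ((p * Q x ^ (p - 1)) • ((fderivInnerCLM ℝ ((x : Euc N), x)).comp
        ((ContinuousLinearMap.id ℝ (Euc N)).prod (ContinuousLinearMap.id ℝ (Euc N))))) x :=
      hrpow.comp_hasFDerivAt x hQder
    have hz2 : HasFDerivAt (fun y => z y ^ 2) ((2 * z x) • fderiv ℝ z x) x := by
      have h := ((hzdiff x).hasFDerivAt).mul ((hzdiff x).hasFDerivAt)
      have e : (fun y => z y ^ 2) = fun y => z y * z y := funext fun y => sq (z y)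
      rw [e, two_mul, add_smul]
      exact h
    have hφder := hz2.mul hwder
    have heval : fderiv ℝ φ x = z x ^ 2 • ((p * Q x ^ (p - 1)) •
        ((fderivInnerCLM ℝ ((x : Euc N), x)).comp
          ((ContinuousLinearMap.id ℝ (Euc N)).prod (ContinuousLinearMap.id ℝ (Euc N)))))
        + w x • ((2 * z x) • fderiv ℝ z x) := by
      rw [hφdef]
      exact hφder.fderiv
    rw [heval]
    simp only [ContinuousLinearMap.add_apply, ContinuousLinearMap.smul_apply,
      ContinuousLinearMap.comp_apply, ContinuousLinearMap.prod_apply,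
      ContinuousLinearMap.id_apply, fderivInnerCLM_apply, smul_eq_mul]
    rw [real_inner_self_eq_norm_sq]
    rw [show p - 1 = (α - 4) / 2 by rw [hpdef]; ring, hpdef]
    ring
  -- integration by parts, coordinatewise
  have key : ∀ i : Fin N, (∫ x : Euc N, φ x)
      = -∫ x : Euc N, fderiv ℝ φ x (EuclideanSpace.single i 1) * x i := by
    intro i
    have hgieq : (fun y : Euc N => y i) = ⇑(EuclideanSpace.proj (𝕜 := ℝ) i) := rfl
    have hg : Differentiable ℝ (fun y : Euc N => y i) := by
      rw [hgieq]; exact (EuclideanSpace.proj (𝕜 := ℝ) i).differentiable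
    have hgfd : ∀ y : Euc N, fderiv ℝ (fun y : Euc N => y i) y = EuclideanSpace.proj i := by
      intro y
      rw [hgieq]
      exact ContinuousLinearMap.fderiv _
    have hvali : (EuclideanSpace.proj (𝕜 := ℝ) i) (EuclideanSpace.single i (1:ℝ)) = 1 := by
      simp [EuclideanSpace.single_apply]
    have h1 : Integrable (fun x : Euc N => fderiv ℝ φ x (EuclideanSpace.single i 1)
        * (fun y : Euc N => y i) x) volume := by
      apply intg _ ((hfφcont.clm_apply continuous_const).mul
        (by rw [hgieq]; exact (EuclideanSpace.proj i).continuous))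
      intro y hy
      simp only [Pi.mul_apply]; rw [hfφ0 y hy]
      simp
    have h2 : Integrable (fun x : Euc N => φ x
        * fderiv ℝ (fun y : Euc N => y i) x (EuclideanSpace.single i 1)) volume := by
      simp only [hgfd, hvali, mul_one]
      exact hintφ
    have h3 : Integrable (fun x : Euc N => φ x * (fun y : Euc N => y i) x) volume := by
      apply intg _ (hφcont.mul (by rw [hgieq]; exact (EuclideanSpace.proj i).continuous))
      intro y hy
      simp only [Pi.mul_apply]; rw [hsupφ y hy, zero_mul]
    have := integral_mul_fderiv_eq_neg_fderiv_mul_of_integrable h1 h2 h3 (fun x _ => hφdiff x) (fun x _ => hg x)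
      (v := EuclideanSpace.single i 1)
    simp only [hgfd, hvali, mul_one] at this
    exact this
  -- summing up: divergence identity
  have hdecomp : ∀ x : Euc N, ∑ i : Fin N, x i • EuclideanSpace.single i (1:ℝ) = x := by
    intro x
    have := (EuclideanSpace.basisFun (Fin N) ℝ).sum_repr x
    simpa [EuclideanSpace.basisFun_apply, EuclideanSpace.basisFun_repr] using this
  have hsum1 : ∀ x : Euc N,
      ∑ i : Fin N, fderiv ℝ φ x (EuclideanSpace.single i 1) * x i = fderiv ℝ φ x x := by
    intro x
    calc ∑ i : Fin N, fderiv ℝ φ x (EuclideanSpace.single i 1) * x i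
        = ∑ i : Fin N, fderiv ℝ φ x (x i • EuclideanSpace.single i 1) := by
          refine Finset.sum_congr rfl fun i _ => ?_
          rw [ContinuousLinearMap.map_smul, smul_eq_mul, mul_comm]
      _ = fderiv ℝ φ x (∑ i : Fin N, x i • EuclideanSpace.single i 1) := (_root_.map_sum _ _ _).symm
      _ = fderiv ℝ φ x x := by rw [hdecomp x]
  have hinti : ∀ i : Fin N, Integrable
      (fun x : Euc N => fderiv ℝ φ x (EuclideanSpace.single i 1) * x i) volume := by
    intro i
    apply intg _ ((hfφcont.clm_apply continuous_const).mul
      ((EuclideanSpace.proj (𝕜 := ℝ) i).continuous))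
    intro y hy
    simp only [Pi.mul_apply]; rw [hfφ0 y hy]
    simp
  have hNsum : (N : ℝ) * ∫ x : Euc N, φ x = -∫ x : Euc N, fderiv ℝ φ x x := by
    have h2 : ∫ x : Euc N, fderiv ℝ φ x x
        = ∑ i : Fin N, ∫ x : Euc N, fderiv ℝ φ x (EuclideanSpace.single i 1) * x i := by
      rw [← integral_finset_sum _ fun i _ => hinti i]
      apply integral_congr_ae
      filter_upwards with x
      exact (hsum1 x).symm
    have h3 : ∀ i : Fin N, (∫ x : Euc N, fderiv ℝ φ x (EuclideanSpace.single i 1) * x i)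
        = -∫ x : Euc N, φ x := fun i => by rw [key i]; ring
    rw [h2]
    rw [Finset.sum_congr rfl fun i _ => h3 i, Finset.sum_const, Finset.card_univ, Fintype.card_fin]
    simp [nsmul_eq_mul]
  -- pointwise inequality
  have hpoint : ∀ x : Euc N, c * φ x ≤ ((N : ℝ) * φ x + fderiv ℝ φ x x)
      + ((c / 2) * φ x + (2 / c) * (Q x ^ (α / 2) * G x ^ 2)) := by
    intro x
    rw [hder x]
    have hQx := hQpos x
    have hwnn : 0 ≤ w x := Real.rpow_nonneg hQx.le p
    have hF : |fderiv ℝ z x x| ≤ G x * ‖x‖ := by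
      simpa [hGdef, Real.norm_eq_abs] using (fderiv ℝ z x).le_opNorm x
    have hx2Q : ‖x‖ ^ 2 ≤ Q x := by
      have hQx' : Q x = ‖x‖ ^ 2 + ε := rfl
      linarith [hQx']
    have hA1 : Q x ^ ((α - 4) / 2) * ‖x‖ ^ 2 ≤ w x := by
      have h1 : Q x ^ ((α - 4) / 2) * ‖x‖ ^ 2 ≤ Q x ^ ((α - 4) / 2) * Q x :=
        mul_le_mul_of_nonneg_left hx2Q (Real.rpow_nonneg hQx.le _)
      have h2 : Q x ^ ((α - 4) / 2) * Q x = Q x ^ p := by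
        rw [← Real.rpow_add_one hQx.ne', hpdef, show (α - 4) / 2 + 1 = (α - 2) / 2 by ring]
      calc Q x ^ ((α - 4) / 2) * ‖x‖ ^ 2 ≤ Q x ^ ((α - 4) / 2) * Q x := h1
        _ = Q x ^ p := h2
    have hA2 : w x * ‖x‖ ^ 2 ≤ Q x ^ (α / 2) := by
      have h1 : w x * ‖x‖ ^ 2 ≤ w x * Q x := mul_le_mul_of_nonneg_left hx2Q hwnn
      have h2 : w x * Q x = Q x ^ (α / 2) := by
        show Q x ^ p * Q x = Q x ^ (α / 2)
        rw [← Real.rpow_add_one hQx.ne', hpdef, show (α - 2) / 2 + 1 = α / 2 by ring]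
      exact h1.trans (le_of_eq h2)
    set a : ℝ := z x with hadef
    set F : ℝ := fderiv ℝ z x x with hFdef
    have h5 : -(2 * a * (w x * F)) ≤ 2 * |a| * (w x * (G x * ‖x‖)) := by
      have h51 : -(a * F) ≤ |a| * |F| := (neg_le_abs _).trans (le_of_eq (abs_mul a F))
      have h53 : |a| * |F| ≤ |a| * (G x * ‖x‖) := mul_le_mul_of_nonneg_left hF (abs_nonneg _)
      nlinarith [mul_le_mul_of_nonneg_left (h51.trans h53) hwnn]
    have amgm : 2 * |a| * (w x * (G x * ‖x‖))
        ≤ (c / 2) * (a ^ 2 * w x) + (2 / c) * (w x * (‖x‖ ^ 2 * G x ^ 2)) := by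
      have hkey : 2 * c * (2 * |a| * (w x * (G x * ‖x‖)))
          ≤ 2 * c * ((c / 2) * (a ^ 2 * w x) + (2 / c) * (w x * (‖x‖ ^ 2 * G x ^ 2))) := by
        have e1 : 2 * c * ((c / 2) * (a ^ 2 * w x) + (2 / c) * (w x * (‖x‖ ^ 2 * G x ^ 2)))
            = c ^ 2 * (a ^ 2 * w x) + 4 * (w x * (‖x‖ ^ 2 * G x ^ 2)) := by
          field_simp
          ring
        rw [e1]
        have hwa : w x * |a| ^ 2 = w x * a ^ 2 := by rw [sq_abs]
        nlinarith [mul_nonneg hwnn (sq_nonneg (c * |a| - 2 * (G x * ‖x‖))), hwa,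
          abs_nonneg a, norm_nonneg x, (norm_nonneg (fderiv ℝ z x) : 0 ≤ G x)]
      exact le_of_mul_le_mul_left hkey (by positivity)
    have h7 : (2 / c) * (w x * (‖x‖ ^ 2 * G x ^ 2)) ≤ (2 / c) * (Q x ^ (α / 2) * G x ^ 2) := by
      apply mul_le_mul_of_nonneg_left _ (by positivity)
      nlinarith [mul_le_mul_of_nonneg_right hA2 (sq_nonneg (G x))]
    have h8 : (α - 2) * (a ^ 2 * w x) ≤ (α - 2) * (a ^ 2 * (Q x ^ ((α - 4) / 2) * ‖x‖ ^ 2)) :=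
      mul_le_mul_of_nonpos_left (mul_le_mul_of_nonneg_left hA1 (sq_nonneg a))
        (by linarith : α - 2 ≤ 0)
    simp only [hφdef]
    rw [← hadef]
    have hcP : c * (a ^ 2 * w x) = ((N : ℝ) - 2 + α) * (a ^ 2 * w x) := by rw [hcN]
    nlinarith [h5, amgm, h7, h8, hcP]
  -- integrate
  have hineq : c * ∫ x : Euc N, φ x ≤ ∫ x : Euc N, (((N : ℝ) * φ x + fderiv ℝ φ x x)
      + ((c / 2) * φ x + (2 / c) * (Q x ^ (α / 2) * G x ^ 2))) := by
    rw [← integral_const_mul]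
    exact integral_mono (hintφ.const_mul c)
      (((hintφ.const_mul _).add hintD).add ((hintφ.const_mul _).add (hintT.const_mul _))) hpoint
  have int1 : Integrable (fun x : Euc N => (N : ℝ) * φ x + fderiv ℝ φ x x) volume :=
    (hintφ.const_mul _).add hintD
  have int2 : Integrable (fun x : Euc N => (c / 2) * φ x
      + (2 / c) * (Q x ^ (α / 2) * G x ^ 2)) volume :=
    (hintφ.const_mul _).add (hintT.const_mul _)
  rw [integral_add int1 int2,
    integral_add (hintφ.const_mul ((N : ℝ))) hintD,
    integral_add (hintφ.const_mul (c / 2)) (hintT.const_mul (2 / c)),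
    integral_const_mul, integral_const_mul, integral_const_mul] at hineq
  have hφle : (c / 2) * ∫ x : Euc N, φ x ≤ (2 / c) * ∫ x : Euc N, Q x ^ (α / 2) * G x ^ 2 := by
    linarith [hineq, hNsum]
  exact hφle

/-- **Weighted Poincaré-type inequality (second assertion of Lemma 3.1).**
If `Ω ⊆ B(0,R)`, then for every `z ∈ C_c^∞(Ω)` one has
`(N-2+α)² ∫_Ω z² dx ≤ (4 R^{2-α}/β) ∫_Ω |x|^α ⟨A∇z, ∇z⟩ dx`; in particular `z`
is square integrable on `Ω`. -/
theorem weighted_poincare_inequality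
    (N : ℕ) (hN : 2 ≤ N)
    (Ω : Set (Euc N)) (hΩo : IsOpen Ω) (hΩb : Bornology.IsBounded Ω)
    (h0 : (0 : Euc N) ∈ Ω)
    (α : ℝ) (hα : α ∈ Set.Ioo (0 : ℝ) 2)
    (A : Euc N → Matrix (Fin N) (Fin N) ℝ)
    (hAcont : ∀ i j, ContinuousOn (fun x => A x i j) (closure Ω))
    (hAsymm : ∀ x, (A x).IsSymm)
    (hAC1 : ∀ i j, ContDiff ℝ 1 (fun x => A x i j))
    (β : ℝ) (hβ : 0 < β)
    (hell : ∀ x ∈ closure Ω, ∀ ξ : Euc N, β * ‖ξ‖ ^ 2 ≤ edot (matVec (A x) ξ) ξ)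
    (R : ℝ) (hR : 0 < R) (hΩR : Ω ⊆ Metric.ball (0 : Euc N) R)
    (z : Euc N → ℝ) (hz : ContDiff ℝ (⊤ : ℕ∞) z) (hzc : HasCompactSupport z)
    (hzsupp : tsupport z ⊆ Ω) :
    MemLp z 2 (volume.restrict Ω) ∧
      ((N : ℝ) - 2 + α) ^ 2 * ∫ x in Ω, z x ^ 2 ≤
        (4 * R ^ (2 - α) / β) *
          ∫ x in Ω, ‖x‖ ^ α * edot (matVec (A x) (gradient z x)) (gradient z x) := by
  obtain ⟨hα0, hα2⟩ := hα
  have hzcont : Continuous z := hz.continuous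
  constructor
  · exact (hzcont.memLp_of_hasCompactSupport hzc).restrict Ω
  set c : ℝ := (N : ℝ) - 2 + α with hcdef
  have hN2 : (2 : ℝ) ≤ (N : ℝ) := by exact_mod_cast hN
  have hc : 0 < c := by simp only [hcdef]; linarith
  -- fderiv facts
  have hfcont : Continuous (fderiv ℝ z) := hz.continuous_fderiv (by simp)
  set G : Euc N → ℝ := fun x => ‖fderiv ℝ z x‖ with hGdef
  have hGcont : Continuous G := hfcont.norm
  have hf0 : ∀ x ∉ tsupport z, fderiv ℝ z x = 0 := by
    intro x hx
    have hx' : x ∉ tsupport (fderiv ℝ z) := fun h => hx (tsupport_fderiv_subset ℝ h)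
    exact image_eq_zero_of_notMem_tsupport hx'
  have hgradf : ∀ x, gradient z x = (InnerProductSpace.toDual ℝ (Euc N)).symm (fderiv ℝ z x) :=
    fun x => rfl
  have hgradnorm : ∀ x, ‖gradient z x‖ = G x := by
    intro x
    rw [hgradf]
    exact (InnerProductSpace.toDual ℝ (Euc N)).symm.norm_map _
  have hgrad0 : ∀ x ∉ tsupport z, gradient z x = 0 := by
    intro x hx
    rw [hgradf, hf0 x hx, map_zero]
  have hgradcont : Continuous (gradient z) :=
    (InnerProductSpace.toDual ℝ (Euc N)).symm.continuous.comp hfcont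
  -- integrability helper
  have intg : ∀ f : Euc N → ℝ, Continuous f → (∀ y ∉ tsupport z, f y = 0) → Integrable f volume :=
    fun f hf h0 => hf.integrable_of_hasCompactSupport (HasCompactSupport.intro hzc h0)
  -- whole space quantities
  set S : ℝ := ∫ x : Euc N, z x ^ 2 with hSdef
  set J : ℝ := ∫ x : Euc N, ‖x‖ ^ α * G x ^ 2 with hJdef
  set K : ℝ := ∫ x : Euc N, G x ^ 2 with hKdef
  have hnormrpow : Continuous fun x : Euc N => ‖x‖ ^ α :=
    continuous_norm.rpow_const fun x => Or.inr hα0.le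
  have hintS : Integrable (fun x : Euc N => z x ^ 2) volume :=
    intg _ (hzcont.pow 2) fun y hy => by
      simp [image_eq_zero_of_notMem_tsupport hy]
  have hintK : Integrable (fun x : Euc N => G x ^ 2) volume :=
    intg _ (hGcont.pow 2) fun y hy => by simp [hGdef, hf0 y hy]
  have hintJ : Integrable (fun x : Euc N => ‖x‖ ^ α * G x ^ 2) volume :=
    intg _ (hnormrpow.mul (hGcont.pow 2)) fun y hy => by simp [hGdef, hf0 y hy]
  -- the ε-claim
  have hclaim : ∀ ε : ℝ, 0 < ε →
      c ^ 2 / 4 * S ≤ (R ^ 2 + ε) ^ ((2 - α) / 2) * (J + ε ^ (α / 2) * K) := by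
    intro ε hε
    have hh := hardy_eps N z hz hzc hε hα0 hα2 hc hcdef
    have hQcont : Continuous fun x : Euc N => ‖x‖ ^ 2 + ε :=
      (continuous_norm.pow 2).add continuous_const
    have hQpos : ∀ x : Euc N, 0 < ‖x‖ ^ 2 + ε := fun x => by positivity
    have hintΦ : Integrable (fun x : Euc N => z x ^ 2 * (‖x‖ ^ 2 + ε) ^ ((α - 2) / 2)) volume :=
      intg _ ((hzcont.pow 2).mul (hQcont.rpow_const fun x => Or.inl (hQpos x).ne'))
        fun y hy => by simp [image_eq_zero_of_notMem_tsupport hy]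
    have hintT : Integrable (fun x : Euc N => (‖x‖ ^ 2 + ε) ^ (α / 2) * G x ^ 2) volume :=
      intg _ ((hQcont.rpow_const fun x => Or.inl (hQpos x).ne').mul (hGcont.pow 2))
        fun y hy => by simp [hGdef, hf0 y hy]
    -- lower bound for Φ
    have hlow : (R ^ 2 + ε) ^ ((α - 2) / 2) * S ≤
        ∫ x : Euc N, z x ^ 2 * (‖x‖ ^ 2 + ε) ^ ((α - 2) / 2) := by
      rw [hSdef, ← integral_const_mul]
      apply integral_mono (hintS.const_mul _) hintΦ
      intro x
      by_cases hzx : z x = 0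
      · simp [hzx]
      · have hxsupp : x ∈ tsupport z := subset_closure (by simpa [Function.mem_support] using hzx)
        have hxR : ‖x‖ < R := by
          have := hΩR (hzsupp hxsupp)
          simpa [Metric.mem_ball, dist_eq_norm] using this
        have hQle : ‖x‖ ^ 2 + ε ≤ R ^ 2 + ε := by
          have : ‖x‖ ^ 2 ≤ R ^ 2 := by nlinarith [norm_nonneg x]
          linarith
        have hr := Real.rpow_le_rpow_of_nonpos (hQpos x) hQle (by linarith : (α - 2) / 2 ≤ 0)
        have hz2 : (0:ℝ) ≤ z x ^ 2 := sq_nonneg _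
        calc (R ^ 2 + ε) ^ ((α - 2) / 2) * z x ^ 2
            ≤ (‖x‖ ^ 2 + ε) ^ ((α - 2) / 2) * z x ^ 2 := mul_le_mul_of_nonneg_right hr hz2
          _ = z x ^ 2 * (‖x‖ ^ 2 + ε) ^ ((α - 2) / 2) := by ring
    -- upper bound for T
    have hup : (∫ x : Euc N, (‖x‖ ^ 2 + ε) ^ (α / 2) * G x ^ 2) ≤ J + ε ^ (α / 2) * K := by
      rw [hJdef, hKdef, ← integral_const_mul, ← integral_add hintJ ((hintK.const_mul _))]
      apply integral_mono hintT (hintJ.add (hintK.const_mul _))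
      intro x
      have hsub : (‖x‖ ^ 2 + ε) ^ (α / 2) ≤ ‖x‖ ^ α + ε ^ (α / 2) := by
        have h1 := aux_rpow_add_le (by positivity : (0:ℝ) ≤ ‖x‖ ^ 2) hε.le
          (by positivity : (0:ℝ) ≤ α / 2) (by linarith : α / 2 ≤ 1)
        have h2 : ((‖x‖ ^ 2 : ℝ)) ^ (α / 2) = ‖x‖ ^ α := by
          rw [← Real.rpow_natCast ‖x‖ 2, ← Real.rpow_mul (norm_nonneg x)]
          norm_num
          rw [show (2:ℝ) * (α / 2) = α by ring]
        rw [h2] at h1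
        exact h1
      have := mul_le_mul_of_nonneg_right hsub (sq_nonneg (G x))
      calc (‖x‖ ^ 2 + ε) ^ (α / 2) * G x ^ 2
          ≤ (‖x‖ ^ α + ε ^ (α / 2)) * G x ^ 2 := this
        _ = ‖x‖ ^ α * G x ^ 2 + ε ^ (α / 2) * G x ^ 2 := by ring
    -- combine
    set t : ℝ := (R ^ 2 + ε) ^ ((α - 2) / 2) with htdef
    set u : ℝ := (R ^ 2 + ε) ^ ((2 - α) / 2) with hudef
    have hR2 : (0:ℝ) < R ^ 2 + ε := by positivity
    have htu : t * u = 1 := by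
      rw [htdef, hudef, ← Real.rpow_add hR2,
        show (α - 2) / 2 + (2 - α) / 2 = 0 by ring, Real.rpow_zero]
    have hupos : 0 < u := Real.rpow_pos_of_pos hR2 _
    have h3 : (c / 2) * (t * S) ≤ (2 / c) * (J + ε ^ (α / 2) * K) := by
      calc (c / 2) * (t * S) ≤ (c / 2) * ∫ x : Euc N, z x ^ 2 * (‖x‖ ^ 2 + ε) ^ ((α - 2) / 2) :=
            mul_le_mul_of_nonneg_left hlow (by positivity)
        _ ≤ (2 / c) * ∫ x : Euc N, (‖x‖ ^ 2 + ε) ^ (α / 2) * G x ^ 2 := hh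
        _ ≤ (2 / c) * (J + ε ^ (α / 2) * K) := mul_le_mul_of_nonneg_left hup (by positivity)
    have h4 := mul_le_mul_of_nonneg_left h3 (by positivity : (0:ℝ) ≤ (c / 2) * u)
    have e1 : (c / 2) * u * ((c / 2) * (t * S)) = c ^ 2 / 4 * S * (t * u) := by ring
    have e2 : (c / 2) * u * ((2 / c) * (J + ε ^ (α / 2) * K)) = u * (J + ε ^ (α / 2) * K) := by
      field_simp
    rw [e1, e2, htu, mul_one] at h4
    exact h4
  -- limit as ε → 0
  have hlim : Tendsto (fun ε : ℝ => (R ^ 2 + ε) ^ ((2 - α) / 2) * (J + ε ^ (α / 2) * K))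
      (nhdsWithin 0 (Ioi 0)) (nhds (R ^ (2 - α) * J)) := by
    have h1 : Tendsto (fun ε : ℝ => (R ^ 2 + ε) ^ ((2 - α) / 2)) (nhdsWithin 0 (Ioi 0))
        (nhds ((R ^ 2 + 0) ^ ((2 - α) / 2))) := by
      apply Tendsto.mono_left _ nhdsWithin_le_nhds
      exact ((Real.continuousAt_rpow_const (R ^ 2 + 0) _
        (Or.inl (by positivity))).comp (continuousAt_const.add continuousAt_id)).tendsto
    have h2 : Tendsto (fun ε : ℝ => ε ^ (α / 2)) (nhdsWithin 0 (Ioi 0))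
        (nhds ((0:ℝ) ^ (α / 2))) :=
      (Real.continuousAt_rpow_const 0 (α / 2) (Or.inr (by positivity))).tendsto.mono_left
        nhdsWithin_le_nhds
    have h3 : Tendsto (fun ε : ℝ => (R ^ 2 + ε) ^ ((2 - α) / 2) * (J + ε ^ (α / 2) * K))
        (nhdsWithin 0 (Ioi 0))
        (nhds ((R ^ 2 + 0) ^ ((2 - α) / 2) * (J + (0:ℝ) ^ (α / 2) * K))) :=
      h1.mul (tendsto_const_nhds.add (h2.mul tendsto_const_nhds))
    have e0 : ((0:ℝ)) ^ (α / 2) = 0 := Real.zero_rpow (by positivity : (0:ℝ) < α / 2).ne'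
    have eR : ((R ^ 2 + 0 : ℝ)) ^ ((2 - α) / 2) = R ^ (2 - α) := by
      rw [add_zero, ← Real.rpow_natCast R 2, ← Real.rpow_mul hR.le]
      norm_num
      rw [show (2:ℝ) * ((2 - α) / 2) = 2 - α by ring]
    rw [e0, eR] at h3
    simpa using h3
  have hmain : c ^ 2 / 4 * S ≤ R ^ (2 - α) * J :=
    ge_of_tendsto hlim (eventually_mem_nhdsWithin.mono fun ε hε => hclaim ε hε)
  -- ellipticity step
  set e : Euc N → ℝ := fun x => ‖x‖ ^ α * edot (matVec (A x) (gradient z x)) (gradient z x)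
    with hedef
  have hecont : Continuous e := by
    apply hnormrpow.mul
    apply continuous_finset_sum
    intro i _
    show Continuous fun a => (∑ j, A a i j * (gradient z a) j) * (gradient z a) i
    exact (continuous_finset_sum _ fun j _ => ((hAC1 i j).continuous.mul
      (((EuclideanSpace.proj j).continuous.comp hgradcont)))).mul
      ((EuclideanSpace.proj i).continuous.comp hgradcont)
  have hedot0 : ∀ M : Matrix (Fin N) (Fin N) ℝ, edot (matVec M 0) (0 : Euc N) = 0 := by
    intro M
    simp [edot, matVec]
  have he0 : ∀ y ∉ tsupport z, e y = 0 := by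
    intro y hy
    simp [hedef, hgrad0 y hy, hedot0]
  have hintE : Integrable e volume := intg _ hecont he0
  have hpe : ∀ x, β * (‖x‖ ^ α * G x ^ 2) ≤ e x := by
    intro x
    by_cases hx : x ∈ closure Ω
    · have h1 := hell x hx (gradient z x)
      rw [hgradnorm] at h1
      have h2 : 0 ≤ ‖x‖ ^ α := rpow_nonneg (norm_nonneg x) α
      calc β * (‖x‖ ^ α * G x ^ 2) = ‖x‖ ^ α * (β * G x ^ 2) := by ring
        _ ≤ ‖x‖ ^ α * edot (matVec (A x) (gradient z x)) (gradient z x) :=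
            mul_le_mul_of_nonneg_left h1 h2
        _ = e x := rfl
    · have hy : x ∉ tsupport z := fun h => hx (subset_closure (hzsupp h))
      have : G x = 0 := by simp [hGdef, hf0 x hy]
      simp [he0 x hy, this]
  have hβJ : β * J ≤ ∫ x : Euc N, e x := by
    rw [hJdef, ← integral_const_mul]
    exact integral_mono (hintJ.const_mul β) hintE hpe
  -- convert set integrals
  have hSset : ∫ x in Ω, z x ^ 2 = S := by
    rw [hSdef]
    apply setIntegral_eq_integral_of_forall_compl_eq_zero
    intro x hx
    have : x ∉ tsupport z := fun h => hx (hzsupp h)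
    simp [image_eq_zero_of_notMem_tsupport this]
  have hEset : (∫ x in Ω, ‖x‖ ^ α * edot (matVec (A x) (gradient z x)) (gradient z x))
      = ∫ x : Euc N, e x := by
    apply setIntegral_eq_integral_of_forall_compl_eq_zero
    intro x hx
    have : x ∉ tsupport z := fun h => hx (hzsupp h)
    exact he0 x this
  rw [hSset, hEset]
  have hRpos : 0 < R ^ (2 - α) := rpow_pos_of_pos hR _
  have hJE : J ≤ (∫ x : Euc N, e x) / β := (le_div_iff₀ hβ).2 (by linarith [hβJ])
  calc c ^ 2 * S = 4 * (c ^ 2 / 4 * S) := by ring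
    _ ≤ 4 * (R ^ (2 - α) * J) := by linarith [hmain]
    _ ≤ 4 * (R ^ (2 - α) * ((∫ x : Euc N, e x) / β)) := by
        have := mul_le_mul_of_nonneg_left hJE hRpos.le
        linarith [this]
    _ = 4 * R ^ (2 - α) / β * ∫ x : Euc N, e x := by ring
end
end

section
/- Cutoff approximation (core step of the density Lemma 3.3): Let ξ : ℝ^N → ℝ be smooth with 0 ≤ ξ ≤ 1, ξ(x) = 1 for |x| ≥ 2 and ξ(x) = 0 for |x| ≤ 1, and set ξ_n(x) := ξ(n x) for n ∈ ℕ. Let z : Ω → ℝ be continuously differentiable with ∫_Ω |x|^{α−2} z(x)² dx < ∞ and ∫_Ω |x|^α ⟨A(x)∇z(x), ∇z(x)⟩ dx < ∞. Then lim_{n→∞} ∫_Ω |x|^α ⟨A(x) ∇((1−ξ_n) z)(x), ∇((1−ξ_n) z)(x)⟩ dx = 0. -/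
open MeasureTheory Real Set Filter

set_option maxHeartbeats 1000000

noncomputable section

open InnerProductSpace in
/-- Norm bound on the gradient of `(1 - ξ(c•·)) z`. -/
lemma cutoff_grad_norm_bound {N : ℕ} (ξ z : Euc N → ℝ) (x : Euc N) (hξ : ContDiff ℝ (⊤ : ℕ∞) ξ)
    (hz : DifferentiableAt ℝ z x) (c : ℝ) (hc : 0 ≤ c) :
    ‖gradient (fun y => (1 - ξ (c • y)) * z y) x‖ ≤
      |1 - ξ (c • x)| * ‖gradient z x‖ + |z x| * (c * ‖gradient ξ (c • x)‖) := by
  have hsc : HasFDerivAt (fun y : Euc N => c • y) (c • ContinuousLinearMap.id ℝ (Euc N)) x :=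
    (hasFDerivAt_id x).const_smul c
  have hξd : HasFDerivAt ξ (fderiv ℝ ξ (c • x)) (c • x) :=
    ((hξ.differentiable (by simp)) (c • x)).hasFDerivAt
  have hcomp : HasFDerivAt (fun y => ξ (c • y))
      ((fderiv ℝ ξ (c • x)).comp (c • ContinuousLinearMap.id ℝ (Euc N))) x := hξd.comp x hsc
  have hu : HasFDerivAt (fun y => 1 - ξ (c • y))
      (0 - (fderiv ℝ ξ (c • x)).comp (c • ContinuousLinearMap.id ℝ (Euc N))) x :=
    (hasFDerivAt_const (1:ℝ) x).sub hcomp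
  have hf := hu.mul hz.hasFDerivAt
  have hgr : gradient (fun y => (1 - ξ (c • y)) * z y) x =
      (toDual ℝ (Euc N)).symm ((1 - ξ (c • x)) • fderiv ℝ z x +
        z x • (0 - (fderiv ℝ ξ (c • x)).comp (c • ContinuousLinearMap.id ℝ (Euc N)))) := by
    rw [gradient]; exact congrArg _ hf.fderiv
  rw [hgr]
  rw [LinearIsometryEquiv.norm_map]
  calc ‖(1 - ξ (c • x)) • fderiv ℝ z x +
        z x • (0 - (fderiv ℝ ξ (c • x)).comp (c • ContinuousLinearMap.id ℝ (Euc N)))‖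
      ≤ ‖(1 - ξ (c • x)) • fderiv ℝ z x‖ +
        ‖z x • (0 - (fderiv ℝ ξ (c • x)).comp (c • ContinuousLinearMap.id ℝ (Euc N)))‖ :=
        norm_add_le _ _
    _ ≤ |1 - ξ (c • x)| * ‖gradient z x‖ + |z x| * (c * ‖gradient ξ (c • x)‖) := by
        gcongr ?_ + ?_
        · rw [norm_smul, Real.norm_eq_abs, gradient, LinearIsometryEquiv.norm_map]
        · rw [zero_sub, smul_neg, norm_neg, norm_smul, Real.norm_eq_abs]
          gcongr
          calc ‖(fderiv ℝ ξ (c • x)).comp (c • ContinuousLinearMap.id ℝ (Euc N))‖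
              ≤ ‖fderiv ℝ ξ (c • x)‖ * ‖c • ContinuousLinearMap.id ℝ (Euc N)‖ :=
                ContinuousLinearMap.opNorm_comp_le _ _
            _ ≤ ‖fderiv ℝ ξ (c • x)‖ * c := by
                have h1 : ‖c • ContinuousLinearMap.id ℝ (Euc N)‖ ≤ c := by
                  refine (ContinuousLinearMap.opNorm_smul_le c _).trans ?_
                  rw [Real.norm_eq_abs, abs_of_nonneg hc]
                  calc c * ‖ContinuousLinearMap.id ℝ (Euc N)‖ ≤ c * 1 :=
                    mul_le_mul_of_nonneg_left ContinuousLinearMap.norm_id_le hc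
                  _ = c := mul_one c
                exact mul_le_mul_of_nonneg_left h1 (norm_nonneg _)
            _ = c * ‖gradient ξ (c • x)‖ := by
                rw [gradient, LinearIsometryEquiv.norm_map, mul_comm]

/-- The gradient of `(1 - ξ(c•·)) z` vanishes where `c * ‖x‖ > 2`. -/
lemma cutoff_grad_zero {N : ℕ} (ξ z : Euc N → ℝ) (hξ1 : ∀ x : Euc N, 2 ≤ ‖x‖ → ξ x = 1)
    (c : ℝ) (hc : 0 ≤ c) (x : Euc N) (hx : 2 < c * ‖x‖) :
    gradient (fun y => (1 - ξ (c • y)) * z y) x = 0 := by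
  have hU : IsOpen {y : Euc N | 2 < c * ‖y‖} :=
    isOpen_lt continuous_const (continuous_const.mul continuous_norm)
  have hev : (fun y => (1 - ξ (c • y)) * z y) =ᶠ[nhds x] (fun _ => (0:ℝ)) := by
    filter_upwards [hU.mem_nhds hx] with y hy
    have : ξ (c • y) = 1 := by
      apply hξ1
      rw [norm_smul, Real.norm_eq_abs, abs_of_nonneg hc]
      exact le_of_lt hy
    simp [this]
  rw [gradient, hev.fderiv_eq]
  simp

/-- The gradient of the cutoff is globally bounded. -/
lemma cutoff_grad_bounded {N : ℕ} (ξ : Euc N → ℝ) (hξ : ContDiff ℝ (⊤ : ℕ∞) ξ)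
    (hξ1 : ∀ x : Euc N, 2 ≤ ‖x‖ → ξ x = 1) (hξ01 : ∀ x, ξ x ∈ Set.Icc (0:ℝ) 1) :
    ∃ L : ℝ, 0 ≤ L ∧ ∀ y : Euc N, ‖gradient ξ y‖ ≤ L := by
  have hgc : Continuous (gradient ξ) := by
    have h1 : Continuous (fderiv ℝ ξ) := (hξ.fderiv_right (m := (⊤ : ℕ∞)) le_rfl).continuous
    exact (LinearIsometryEquiv.continuous _).comp h1
  obtain ⟨L, hL⟩ := (isCompact_closedBall (0 : Euc N) 2).exists_bound_of_continuousOn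
    hgc.continuousOn
  refine ⟨max L 0, le_max_right _ _, fun y => ?_⟩
  by_cases hy : ‖y‖ ≤ 2
  · exact (hL y (by simpa [Metric.mem_closedBall, dist_zero_right] using hy)).trans
      (le_max_left _ _)
  · have : gradient ξ y = 0 := by
      rw [gradient]
      have hmax : IsLocalMax ξ y := by
        filter_upwards with w using by
          rw [hξ1 y (by linarith [le_of_not_ge hy])]; exact (hξ01 w).2
      rw [hmax.fderiv_eq_zero, map_zero]
    simp [this]

/-- Coordinates are bounded by the norm. -/
lemma euc_coord_le_norm {N : ℕ} (v : Euc N) (i : Fin N) : |v i| ≤ ‖v‖ := by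
  rw [EuclideanSpace.norm_eq v, ← Real.sqrt_sq_eq_abs]
  apply Real.sqrt_le_sqrt
  calc (v i)^2 ≤ ∑ j, (v j)^2 :=
    Finset.single_le_sum (f := fun j => (v j)^2) (fun j _ => sq_nonneg _) (Finset.mem_univ i)
  _ = ∑ j, ‖v j‖^2 := by simp [Real.norm_eq_abs, sq_abs]

/-- Quadratic form bound by the sum of absolute values of entries. -/
lemma edot_quad_bound {N : ℕ} (A : Matrix (Fin N) (Fin N) ℝ) (v : Euc N) :
    |edot (matVec A v) v| ≤ (∑ i, ∑ j, |A i j|) * ‖v‖^2 := by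
  rw [edot, Finset.sum_mul]
  refine (Finset.abs_sum_le_sum_abs _ _).trans (Finset.sum_le_sum fun i _ => ?_)
  show |(∑ j, A i j * v j) * v i| ≤ (∑ j, |A i j|) * ‖v‖^2
  rw [abs_mul, Finset.sum_mul]
  refine le_trans (mul_le_mul_of_nonneg_right (Finset.abs_sum_le_sum_abs _ _) (abs_nonneg _)) ?_
  rw [Finset.sum_mul]
  refine Finset.sum_le_sum fun j _ => ?_
  rw [abs_mul, mul_assoc, pow_two]
  exact mul_le_mul_of_nonneg_left
    (mul_le_mul (euc_coord_le_norm v j) (euc_coord_le_norm v i) (abs_nonneg _) (norm_nonneg _))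
    (abs_nonneg _)

/-- **Cutoff approximation (core step of the density Lemma 3.3).**
With `ξ` a smooth cutoff vanishing on the unit ball and equal to `1` outside the
ball of radius 2, `ξ_n(x) := ξ(n x)`, and `z` continuously differentiable with
finite weighted Hardy and Dirichlet integrals, the weighted Dirichlet energy of
`(1 - ξ_n) z` tends to `0`. -/
theorem cutoff_approximation
    (N : ℕ) (hN : 2 ≤ N)
    (Ω : Set (Euc N)) (hΩo : IsOpen Ω) (hΩb : Bornology.IsBounded Ω)
    (h0 : (0 : Euc N) ∈ Ω)
    (α : ℝ) (hα : α ∈ Set.Ioo (0 : ℝ) 2)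
    (A : Euc N → Matrix (Fin N) (Fin N) ℝ)
    (hAcont : ∀ i j, ContinuousOn (fun x => A x i j) (closure Ω))
    (hAsymm : ∀ x, (A x).IsSymm)
    (hAC1 : ∀ i j, ContDiff ℝ 1 (fun x => A x i j))
    (β : ℝ) (hβ : 0 < β)
    (hell : ∀ x ∈ closure Ω, ∀ ξ : Euc N, β * ‖ξ‖ ^ 2 ≤ edot (matVec (A x) ξ) ξ)
    (ξ : Euc N → ℝ) (hξ : ContDiff ℝ (⊤ : ℕ∞) ξ) (hξ01 : ∀ x, ξ x ∈ Set.Icc (0 : ℝ) 1)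
    (hξ1 : ∀ x : Euc N, 2 ≤ ‖x‖ → ξ x = 1) (hξ0 : ∀ x : Euc N, ‖x‖ ≤ 1 → ξ x = 0)
    (z : Euc N → ℝ) (hz : ContDiffOn ℝ 1 z Ω)
    (hz1 : IntegrableOn (fun x => ‖x‖ ^ (α - 2) * z x ^ 2) Ω volume)
    (hz2 : IntegrableOn
      (fun x => ‖x‖ ^ α * edot (matVec (A x) (gradient z x)) (gradient z x)) Ω volume) :
    Tendsto
      (fun n : ℕ =>
        ∫ x in Ω, ‖x‖ ^ α *
          edot
            (matVec (A x) (gradient (fun y => (1 - ξ ((n : ℝ) • y)) * z y) x))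
            (gradient (fun y => (1 - ξ ((n : ℝ) • y)) * z y) x))
      atTop (nhds 0) := by
  obtain ⟨hα0, hα2⟩ := hα
  haveI : Nonempty (Fin N) := ⟨⟨0, by omega⟩⟩
  have hΩm : MeasurableSet Ω := hΩo.measurableSet
  -- a.e. nonzero
  have hne0 : ∀ᵐ x : Euc N ∂volume, x ≠ 0 := by
    rw [ae_iff]
    simpa using measure_singleton (0 : Euc N)
  -- matrix bound
  obtain ⟨M, hM0, hM⟩ : ∃ M : ℝ, 0 ≤ M ∧ ∀ x ∈ closure Ω, (∑ i, ∑ j, |A x i j|) ≤ M := by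
    have hS : Continuous fun x => ∑ i, ∑ j, |A x i j| := by
      apply continuous_finset_sum; intro i _; apply continuous_finset_sum; intro j _
      exact (hAC1 i j).continuous.abs
    have hcpt : IsCompact (closure Ω) :=
      Metric.isCompact_of_isClosed_isBounded isClosed_closure hΩb.closure
    obtain ⟨C, hC⟩ := hcpt.exists_bound_of_continuousOn hS.continuousOn
    exact ⟨max C 0, le_max_right _ _, fun x hx =>
      (le_abs_self _).trans ((hC x hx).trans (le_max_left _ _))⟩
  -- cutoff gradient bound
  obtain ⟨L, hL0, hL⟩ := cutoff_grad_bounded ξ hξ hξ1 hξ01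
  -- weight continuity
  have hw : Continuous fun x : Euc N => ‖x‖ ^ α :=
    continuous_iff_continuousAt.2 fun _ =>
      (Real.continuousAt_rpow_const _ _ (Or.inr hα0.le)).comp continuous_norm.continuousAt
  have hwnn : ∀ x : Euc N, (0:ℝ) ≤ ‖x‖ ^ α := fun x => Real.rpow_nonneg (norm_nonneg x) α
  -- gradient of z continuous on Ω
  have hgz : ContinuousOn (gradient z) Ω :=
    (LinearIsometryEquiv.continuous _).comp_continuousOn
      (hz.continuousOn_fderiv_of_isOpen hΩo le_rfl)
  -- continuity of integrands
  have hcont : ∀ G : Euc N → Euc N, ContinuousOn G Ω →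
      ContinuousOn (fun x => ‖x‖ ^ α * edot (matVec (A x) (G x)) (G x)) Ω := by
    intro G hG
    have hGj : ∀ j, ContinuousOn (fun x => G x j) Ω := fun j =>
      (EuclideanSpace.proj j : Euc N →L[ℝ] ℝ).continuous.comp_continuousOn hG
    refine hw.continuousOn.mul ?_
    show ContinuousOn (fun x => ∑ i, (∑ j, A x i j * G x j) * G x i) Ω
    apply continuousOn_finset_sum
    intro i _
    refine ContinuousOn.mul ?_ (hGj i)
    apply continuousOn_finset_sum
    intro j _
    exact ((hAC1 i j).continuous).continuousOn.mul (hGj j)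
  -- dominating function
  have hFnn : ∀ x : Euc N, 0 ≤
      2*M*(‖x‖ ^ α * ‖gradient z x‖^2) + (8*(M*L^2))*(‖x‖ ^ (α-2) * z x ^ 2) := by
    intro x
    apply add_nonneg
    · exact mul_nonneg (by linarith) (mul_nonneg (hwnn x) (sq_nonneg _))
    · exact mul_nonneg (by nlinarith [sq_nonneg L]) (mul_nonneg
        (Real.rpow_nonneg (norm_nonneg x) _) (sq_nonneg _))
  -- integrability of the dominating function
  have hI1 : IntegrableOn (fun x => ‖x‖ ^ α * ‖gradient z x‖^2) Ω volume := by
    refine Integrable.mono' (hz2.const_mul β⁻¹) ?_ ?_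
    · exact (hw.continuousOn.mul ((hgz.norm).pow 2)).aestronglyMeasurable hΩm
    · filter_upwards [ae_restrict_mem hΩm] with x hx
      have hx' : x ∈ closure Ω := subset_closure hx
      have h1 := hell x hx' (gradient z x)
      have h2 : ‖gradient z x‖^2 ≤ β⁻¹ * edot (matVec (A x) (gradient z x)) (gradient z x) := by
        have h3 := mul_le_mul_of_nonneg_left h1 (inv_nonneg.2 hβ.le)
        rwa [← mul_assoc, inv_mul_cancel₀ hβ.ne', one_mul] at h3
      rw [Real.norm_eq_abs, abs_of_nonneg (mul_nonneg (hwnn x) (sq_nonneg _))]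
      calc ‖x‖ ^ α * ‖gradient z x‖^2
          ≤ ‖x‖ ^ α * (β⁻¹ * edot (matVec (A x) (gradient z x)) (gradient z x)) :=
            mul_le_mul_of_nonneg_left h2 (hwnn x)
        _ = β⁻¹ * (‖x‖ ^ α * edot (matVec (A x) (gradient z x)) (gradient z x)) := by ring
  have hFint : IntegrableOn (fun x =>
      2*M*(‖x‖ ^ α * ‖gradient z x‖^2) + (8*(M*L^2))*(‖x‖ ^ (α-2) * z x ^ 2)) Ω volume :=
    (hI1.const_mul (2*M)).add (hz1.const_mul (8*(M*L^2)))
  -- measurability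
  have hmeas : ∀ n : ℕ, AEStronglyMeasurable
      (fun x => ‖x‖ ^ α *
        edot (matVec (A x) (gradient (fun y => (1 - ξ ((n : ℝ) • y)) * z y) x))
          (gradient (fun y => (1 - ξ ((n : ℝ) • y)) * z y) x)) (volume.restrict Ω) := by
    intro n
    have hfn : ContDiffOn ℝ 1 (fun y => (1 - ξ ((n:ℝ) • y)) * z y) Ω := by
      refine ContDiffOn.mul ?_ hz
      exact (contDiff_const.sub ((hξ.of_le (by simp)).comp
        (contDiff_id.const_smul ((n:ℝ))))).contDiffOn
    have hGc : ContinuousOn (gradient (fun y => (1 - ξ ((n:ℝ) • y)) * z y)) Ω :=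
      (LinearIsometryEquiv.continuous _).comp_continuousOn
        (hfn.continuousOn_fderiv_of_isOpen hΩo le_rfl)
    exact (hcont _ hGc).aestronglyMeasurable hΩm
  -- bound
  have hbound : ∀ n : ℕ, ∀ᵐ x ∂(volume.restrict Ω),
      ‖‖x‖ ^ α *
        edot (matVec (A x) (gradient (fun y => (1 - ξ ((n : ℝ) • y)) * z y) x))
          (gradient (fun y => (1 - ξ ((n : ℝ) • y)) * z y) x)‖ ≤
      2*M*(‖x‖ ^ α * ‖gradient z x‖^2) + (8*(M*L^2))*(‖x‖ ^ (α-2) * z x ^ 2) := by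
    intro n
    filter_upwards [ae_restrict_mem hΩm, ae_restrict_of_ae hne0] with x hxΩ hx0
    have hxpos : 0 < ‖x‖ := norm_pos_iff.2 hx0
    by_cases hcase : 2 < (n:ℝ) * ‖x‖
    · have hg0 := cutoff_grad_zero ξ z hξ1 ((n:ℝ)) (Nat.cast_nonneg n) x hcase
      rw [hg0]
      have hz0 : edot (matVec (A x) (0 : Euc N)) (0 : Euc N) = 0 := by simp [edot]
      rw [hz0, mul_zero, norm_zero]
      exact hFnn x
    · push_neg at hcase
      have hzd : DifferentiableAt ℝ z x :=
        (hz.differentiableOn one_ne_zero).differentiableAt (hΩo.mem_nhds hxΩ)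
      have hgb := cutoff_grad_norm_bound ξ z x hξ hzd ((n:ℝ)) (Nat.cast_nonneg n)
      set g := gradient (fun y => (1 - ξ ((n:ℝ) • y)) * z y) x with hgd
      set a := ‖gradient z x‖ with had
      have ha0 : 0 ≤ a := norm_nonneg _
      have ht : |1 - ξ ((n:ℝ) • x)| ≤ 1 := by
        have h01 := hξ01 ((n:ℝ) • x)
        rw [abs_le]; constructor
        · linarith [h01.2]
        · linarith [h01.1]
      have h3' : ‖g‖ ≤ a + |z x| * ((n:ℝ) * L) := by
        refine hgb.trans (add_le_add ?_ ?_)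
        · calc |1 - ξ ((n:ℝ) • x)| * a ≤ 1 * a := mul_le_mul_of_nonneg_right ht ha0
          _ = a := one_mul a
        · exact mul_le_mul_of_nonneg_left
            (mul_le_mul_of_nonneg_left (hL _) (Nat.cast_nonneg n)) (abs_nonneg _)
      have h4 : ‖g‖^2 ≤ 2*a^2 + 2*(z x)^2*((n:ℝ)*L)^2 := by
        nlinarith [norm_nonneg g, sq_abs (z x), abs_nonneg (z x),
          mul_nonneg (abs_nonneg (z x)) (mul_nonneg (Nat.cast_nonneg n : (0:ℝ) ≤ n) hL0),
          sq_nonneg (a - |z x| * ((n:ℝ)*L))]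
      have h1 : |edot (matVec (A x) g) g| ≤ (∑ i, ∑ j, |A x i j|) * ‖g‖^2 :=
        edot_quad_bound (A x) g
      have h2 : (∑ i, ∑ j, |A x i j|) ≤ M := hM x (subset_closure hxΩ)
      have h5 : ‖x‖ ^ α * (n:ℝ)^2 ≤ 4 * ‖x‖ ^ (α - 2) := by
        have heq : ‖x‖ ^ α * (n:ℝ)^2 = ‖x‖ ^ (α - 2) * ((n:ℝ) * ‖x‖)^2 := by
          have hxx : ‖x‖ ^ α = ‖x‖ ^ (α - 2) * ‖x‖^2 := by
            rw [← Real.rpow_natCast ‖x‖ 2, ← Real.rpow_add hxpos]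
            norm_num
          rw [hxx]; ring
        rw [heq]
        have hsq : ((n:ℝ) * ‖x‖)^2 ≤ 4 := by
          nlinarith [mul_nonneg (Nat.cast_nonneg n : (0:ℝ) ≤ n) hxpos.le]
        nlinarith [Real.rpow_nonneg (norm_nonneg x) (α - 2)]
      -- assemble
      rw [Real.norm_eq_abs, abs_mul, abs_of_nonneg (hwnn x)]
      calc ‖x‖ ^ α * |edot (matVec (A x) g) g|
          ≤ ‖x‖ ^ α * (M * (2*a^2 + 2*(z x)^2*((n:ℝ)*L)^2)) := by
            refine mul_le_mul_of_nonneg_left ?_ (hwnn x)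
            calc |edot (matVec (A x) g) g| ≤ (∑ i, ∑ j, |A x i j|) * ‖g‖^2 := h1
              _ ≤ M * (2*a^2 + 2*(z x)^2*((n:ℝ)*L)^2) := mul_le_mul h2 h4 (sq_nonneg _) hM0
        _ = 2*M*(‖x‖ ^ α * a^2) + (2*(M*L^2))*((z x)^2*(‖x‖ ^ α * (n:ℝ)^2)) := by ring
        _ ≤ 2*M*(‖x‖ ^ α * a^2) + (2*(M*L^2))*((z x)^2*(4 * ‖x‖ ^ (α-2))) := by
            refine add_le_add le_rfl (mul_le_mul_of_nonneg_left
              (mul_le_mul_of_nonneg_left h5 (sq_nonneg _))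
              (mul_nonneg (by linarith) (mul_nonneg hM0 (sq_nonneg L))))
        _ = 2*M*(‖x‖ ^ α * a^2) + (8*(M*L^2))*(‖x‖ ^ (α-2) * z x ^ 2) := by ring
  -- pointwise limit
  have hlim : ∀ᵐ x ∂(volume.restrict Ω), Tendsto (fun n : ℕ =>
      ‖x‖ ^ α *
        edot (matVec (A x) (gradient (fun y => (1 - ξ ((n : ℝ) • y)) * z y) x))
          (gradient (fun y => (1 - ξ ((n : ℝ) • y)) * z y) x)) atTop (nhds 0) := by
    filter_upwards [ae_restrict_of_ae hne0] with x hx0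
    have hxpos : 0 < ‖x‖ := norm_pos_iff.2 hx0
    have hev : (fun n : ℕ =>
        ‖x‖ ^ α *
          edot (matVec (A x) (gradient (fun y => (1 - ξ ((n : ℝ) • y)) * z y) x))
            (gradient (fun y => (1 - ξ ((n : ℝ) • y)) * z y) x)) =ᶠ[atTop]
        (fun _ => (0:ℝ)) := by
      filter_upwards [eventually_gt_atTop ⌈3/‖x‖⌉₊] with n hn
      have h3 : (3:ℝ)/‖x‖ ≤ (n:ℝ) :=
        (Nat.le_ceil _).trans (by exact_mod_cast hn.le)
      have h2 : 2 < (n:ℝ) * ‖x‖ := by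
        have := (div_le_iff₀ hxpos).1 h3
        linarith
      have hg0 := cutoff_grad_zero ξ z hξ1 ((n:ℝ)) (Nat.cast_nonneg n) x h2
      rw [hg0]
      have hz0 : edot (matVec (A x) (0 : Euc N)) (0 : Euc N) = 0 := by simp [edot]
      rw [hz0, mul_zero]
    exact (tendsto_congr' hev).2 tendsto_const_nhds
  have hfinal := MeasureTheory.tendsto_integral_of_dominated_convergence
    (μ := volume.restrict Ω) (f := fun _ : Euc N => (0:ℝ))
    (fun x => 2*M*(‖x‖ ^ α * ‖gradient z x‖^2) + (8*(M*L^2))*(‖x‖ ^ (α-2) * z x ^ 2))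
    hmeas hFint hbound hlim
  simpa using hfinal
end
end

section
/- Weight function for the case 0 ∉ ω₀ (Lemma 4.4): Let ε ∈ (0, d(0,∂Ω)) where d(0,∂Ω) = inf_{y∈∂Ω}|y|, and let ω ⊆ Ω be open. Suppose ζ : ℝ^N → ℝ is twice continuously differentiable on a neighborhood of Ω̄ with ζ = 0 on ∂Ω, ζ > 0 in Ω, and |∇ζ(x)| ≥ c₁ > 0 for all x ∈ Ω \ ω. Suppose h : ℝ^N → [0,1] is smooth with h(x) = 2ε^{−2}|x|² for |x| ≤ ε/2, h(x) = 1 for |x| ≥ ε, and h(x) > 0 for x ≠ 0. Set η := h·ζ. Then: (a) η > 0 on Ω \ {0} and η = 0 on ∂Ω ∪ {0}; (b) the map x ↦ |x|^α A(x)∇η(x) extends continuously to Ω̄ with value 0 at x = 0; (c) there is a constant C > 0 such that |x|^α ⟨A(x)∇η(x), ∇η(x)⟩ ≥ C for all x ∈ Ω \ (ω ∪ B(0,ε)). -/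
open MeasureTheory Real Set Filter

noncomputable section

/-- **Weight function for the case `0 ∉ ω₀` (Lemma 4.4).**
With `ζ` positive in `Ω`, vanishing on `∂Ω`, with nondegenerate gradient
outside `ω`, and `h` a smooth `[0,1]`-valued function equal to `2ε⁻²|x|²`
near `0` and to `1` outside `B(0,ε)`, the product `η = h ζ` satisfies:
(a) `η > 0` on `Ω \ {0}` and `η = 0` on `∂Ω ∪ {0}`;
(b) `x ↦ |x|^α A(x)∇η(x)` is continuous on `Ω̄` and vanishes at `x = 0`;
(c) `|x|^α ⟨A∇η, ∇η⟩` is bounded below by a positive constant on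
`Ω \ (ω ∪ B(0,ε))`. -/
theorem weight_function_zero_not_in_control_region
    (N : ℕ) (hN : 2 ≤ N)
    (Ω : Set (Euc N)) (hΩo : IsOpen Ω) (hΩb : Bornology.IsBounded Ω)
    (h0 : (0 : Euc N) ∈ Ω)
    (α : ℝ) (hα : α ∈ Set.Ioo (0 : ℝ) 2)
    (A : Euc N → Matrix (Fin N) (Fin N) ℝ)
    (hAcont : ∀ i j, ContinuousOn (fun x => A x i j) (closure Ω))
    (hAsymm : ∀ x, (A x).IsSymm)
    (hAC1 : ∀ i j, ContDiff ℝ 1 (fun x => A x i j))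
    (β : ℝ) (hβ : 0 < β)
    (hell : ∀ x ∈ closure Ω, ∀ ξ : Euc N, β * ‖ξ‖ ^ 2 ≤ edot (matVec (A x) ξ) ξ)
    (ε : ℝ) (hε : 0 < ε) (hεd : ε < Metric.infDist (0 : Euc N) (frontier Ω))
    (ω : Set (Euc N)) (hωo : IsOpen ω) (hωΩ : ω ⊆ Ω)
    (ζ : Euc N → ℝ)
    (U : Set (Euc N)) (hU : IsOpen U) (hΩU : closure Ω ⊆ U)
    (hζC2 : ContDiffOn ℝ 2 ζ U)
    (hζ0 : ∀ x ∈ frontier Ω, ζ x = 0) (hζpos : ∀ x ∈ Ω, 0 < ζ x)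
    (c₁ : ℝ) (hc₁ : 0 < c₁)
    (hζgrad : ∀ x ∈ Ω \ ω, c₁ ≤ ‖gradient ζ x‖)
    (h : Euc N → ℝ) (hhC : ContDiff ℝ (⊤ : ℕ∞) h)
    (hh01 : ∀ x, h x ∈ Set.Icc (0 : ℝ) 1)
    (hhquad : ∀ x : Euc N, ‖x‖ ≤ ε / 2 → h x = 2 * ε⁻¹ ^ 2 * ‖x‖ ^ 2)
    (hh1 : ∀ x : Euc N, ε ≤ ‖x‖ → h x = 1)
    (hhpos : ∀ x : Euc N, x ≠ 0 → 0 < h x)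
    (η : Euc N → ℝ) (hη : η = fun x => h x * ζ x) :
    ((∀ x ∈ Ω, x ≠ 0 → 0 < η x) ∧ (∀ x, x ∈ frontier Ω ∪ {(0 : Euc N)} → η x = 0)) ∧
    (ContinuousOn (fun x : Euc N => ‖x‖ ^ α • matVec (A x) (gradient η x)) (closure Ω) ∧
      ‖(0 : Euc N)‖ ^ α • matVec (A 0) (gradient η 0) = (0 : Euc N)) ∧
    (∃ C > (0 : ℝ), ∀ x ∈ Ω \ (ω ∪ Metric.ball (0 : Euc N) ε),
      C ≤ ‖x‖ ^ α * edot (matVec (A x) (gradient η x)) (gradient η x)) := by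
  have hh0 : h 0 = 0 := by
    have := hhquad 0 (by simp; positivity)
    simpa using this
  -- C¹ regularity of η on U
  have hηC1 : ContDiffOn ℝ 1 η U := by
    rw [hη]
    exact (hhC.of_le (by simp)).contDiffOn.mul (hζC2.of_le one_le_two)
  have hgradcont : ContinuousOn (gradient η) U := by
    have hfd : ContinuousOn (fderiv ℝ η) U :=
      hηC1.continuousOn_fderiv_of_isOpen hU le_rfl
    exact ((InnerProductSpace.toDual ℝ (Euc N)).symm.continuous.comp_continuousOn hfd)
  refine ⟨⟨?_, ?_⟩, ⟨?_, ?_⟩, ?_⟩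
  · intro x hx hx0
    rw [hη]
    exact mul_pos (hhpos x hx0) (hζpos x hx)
  · intro x hx
    rcases hx with hx | hx
    · rw [hη]; simp [hζ0 x hx]
    · simp only [Set.mem_singleton_iff] at hx
      rw [hη, hx]
      simp [hh0]
  · -- continuity on closure Ω
    apply ContinuousOn.fun_smul
    · exact (Continuous.rpow_const continuous_norm (fun x => Or.inr hα.1.le)).continuousOn
    · have hcomp : ∀ i, ContinuousOn (fun x => ∑ j, A x i j * gradient η x j) (closure Ω) := by
        intro i
        apply continuousOn_finset_sum
        intro j _
        exact (hAcont i j).mul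
          ((EuclideanSpace.proj (𝕜 := ℝ) j).continuous.comp_continuousOn (hgradcont.mono hΩU))
      exact (PiLp.continuous_toLp ..).comp_continuousOn (continuousOn_pi.mpr hcomp)
  · simp [Real.zero_rpow hα.1.ne']
  · -- part (c)
    refine ⟨ε ^ α * (β * c₁ ^ 2), by positivity, ?_⟩
    intro x hx
    obtain ⟨hxΩ, hxn⟩ := hx
    simp only [Set.mem_union, not_or, Metric.mem_ball, dist_zero_right, not_lt] at hxn
    obtain ⟨hxω, hxε⟩ := hxn
    have hxU : x ∈ U := hΩU (subset_closure hxΩ)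
    have hζdiff : DifferentiableAt ℝ ζ x :=
      (hζC2.differentiableOn (by norm_num)).differentiableAt (hU.mem_nhds hxU)
    have hhdiff : DifferentiableAt ℝ h x := (hhC.differentiable (by simp)).differentiableAt
    have hmax : IsLocalMax h x := by
      apply Filter.Eventually.of_forall
      intro y
      rw [hh1 x hxε]
      exact (hh01 y).2
    have hdh : fderiv ℝ h x = 0 := hmax.fderiv_eq_zero
    have hfeq : fderiv ℝ η x = fderiv ℝ ζ x := by
      rw [hη, fderiv_fun_mul hhdiff hζdiff, hdh, hh1 x hxε]
      simp
    have hgeq : gradient η x = gradient ζ x := by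
      unfold gradient
      rw [hfeq]
    rw [hgeq]
    have h1 : ε ^ α ≤ ‖x‖ ^ α := Real.rpow_le_rpow hε.le hxε hα.1.le
    have h2 : β * c₁ ^ 2 ≤ edot (matVec (A x) (gradient ζ x)) (gradient ζ x) := by
      refine le_trans ?_ (hell x (subset_closure hxΩ) (gradient ζ x))
      have := hζgrad x ⟨hxΩ, hxω⟩
      have : c₁ ^ 2 ≤ ‖gradient ζ x‖ ^ 2 := by
        apply pow_le_pow_left₀ hc₁.le this
      nlinarith
    calc ε ^ α * (β * c₁ ^ 2) ≤ ‖x‖ ^ α * (β * c₁ ^ 2) := by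
          apply mul_le_mul_of_nonneg_right h1 (by positivity)
      _ ≤ ‖x‖ ^ α * edot (matVec (A x) (gradient ζ x)) (gradient ζ x) := by
          apply mul_le_mul_of_nonneg_left h2 (Real.rpow_nonneg (norm_nonneg x) α)
end
end
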